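/- arXiv:0811.0290 — 2 statements merged into one kernel-verified Lean document; each statement's English description precedes it below -/
import Mathlib

section
/- Let r ≥ 2 be an integer. For every n ≥ 1, m_r(n) = m_r(n−1) + (r^{2τ+1} + 1)/(r + 1), where τ ≥ 0 is the largest integer such that r^τ divides n (equivalently, τ is the index of the least nonzero base-r digit of n); note that r + 1 divides r^{2τ+1} + 1, so the quotient is an integer. -/
/-- Moser function `m_r(n)`: reinterpret the base-`r` digits of `n` as base-`r²` digits,
i.e. `m_r(n) = Σ_i ν_i r^(2i)` where `n = Σ_i ν_i r^i` is the base-`r` expansion. -/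
def moser (r n : ℕ) : ℕ := Nat.ofDigits (r ^ 2) (Nat.digits r n)

/-- `s^(r)_n = r · m_r(n−1) + 1` for `n ≥ 1`. -/
def moserS (r n : ℕ) : ℕ := r * moser r (n - 1) + 1

/-- The `i`-th base-`r` digit of `n` (0 if beyond the expansion). -/
def dig (r n i : ℕ) : ℕ := (Nat.digits r n).getD i 0

/-- Josephus–Groër survivor function: with `M = N` if `N` is odd, `M = N − 1` otherwise,
and `M = Σ_j b_j 2^j` the binary expansion, `W(N) = 1 + Σ_{j odd} b_j 2^j`. -/
def W (N : ℕ) : ℕ :=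
  let M := if N % 2 = 1 then N else N - 1
  1 + ((((Nat.digits 2 M).zipIdx.map Prod.swap).filter (fun p => p.1 % 2 = 1)).map (fun p => p.2 * 2 ^ p.1)).sum

/-! Write `n = r^τ q` with `r ∤ q`. Subtracting one from `q` lowers its last digit by one, so
`m_r` drops by `1`; passing from `k` to `r k` multiplies `m_r(k)` by `r²` while `r k - 1` gains
the digit `r - 1`. Induction on `τ` then gives
`(r + 1) m_r(n) = (r + 1) m_r(n - 1) + r^(2τ+1) + 1`, which also shows `r + 1 ∣ r^(2τ+1) + 1`. -/

section

variable {r : ℕ}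

theorem moser_add_mul (hr : 1 < r) {d : ℕ} (hd : d < r) (k : ℕ) :
    moser r (d + r * k) = d + r ^ 2 * moser r k := by
  rcases eq_or_ne d 0 with rfl | hd0
  · rcases eq_or_ne k 0 with rfl | hk
    · simp [moser]
    · rw [moser, Nat.digits_add r hr 0 k hd (Or.inr hk), Nat.ofDigits_cons, moser]
  · rw [moser, Nat.digits_add r hr d k hd (Or.inl hd0), Nat.ofDigits_cons, moser]

theorem moser_mul (hr : 1 < r) (k : ℕ) : moser r (r * k) = r ^ 2 * moser r k := by
  simpa using moser_add_mul hr (d := 0) (by omega) k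

theorem moser_mul_sub_one (hr : 1 < r) {k : ℕ} (hk : k ≠ 0) :
    moser r (r * k - 1) = (r - 1) + r ^ 2 * moser r (k - 1) := by
  have h : r * k - 1 = (r - 1) + r * (k - 1) := by
    obtain ⟨j, rfl⟩ := Nat.exists_eq_succ_of_ne_zero hk
    rw [Nat.mul_succ, Nat.succ_sub_one]
    omega
  rw [h, moser_add_mul hr (by omega)]

theorem moser_eq_moser_sub_one_add_one (hr : 1 < r) {q : ℕ} (hq : ¬ r ∣ q) :
    moser r q = moser r (q - 1) + 1 := by
  have hd : 0 < q % r := Nat.pos_of_ne_zero fun h => hq (Nat.dvd_of_mod_eq_zero h)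
  have hdr : q % r < r := Nat.mod_lt q (by omega)
  have hq' : q - 1 = (q % r - 1) + r * (q / r) := by
    have := Nat.mod_add_div q r
    omega
  conv_lhs => rw [← Nat.mod_add_div q r]
  rw [hq', moser_add_mul hr hdr, moser_add_mul hr (by omega)]
  omega

theorem add_one_mul_moser_pow_mul (hr : 1 < r) (τ : ℕ) {q : ℕ} (hq : ¬ r ∣ q) :
    (r + 1) * moser r (r ^ τ * q) =
      (r + 1) * moser r (r ^ τ * q - 1) + (r ^ (2 * τ + 1) + 1) := by
  induction τ with
  | zero =>
    rw [pow_zero, one_mul, moser_eq_moser_sub_one_add_one hr hq]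
    ring
  | succ τ ih =>
    have hk : r ^ τ * q ≠ 0 :=
      mul_ne_zero (pow_ne_zero _ (by omega)) fun h => hq (h ▸ dvd_zero r)
    rw [pow_succ', mul_assoc, moser_mul hr, moser_mul_sub_one hr hk]
    zify [hr.le] at ih ⊢
    linear_combination (r : ℤ) ^ 2 * ih

end

theorem moser_recursion_general (r : ℕ) (hr : 2 ≤ r) (n : ℕ)
    (τ : ℕ) (hτ : r ^ τ ∣ n) (hτ' : ¬ r ^ (τ + 1) ∣ n) :
    (r + 1) ∣ r ^ (2 * τ + 1) + 1 ∧
      moser r n = moser r (n - 1) + (r ^ (2 * τ + 1) + 1) / (r + 1) := by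
  obtain ⟨q, rfl⟩ := hτ
  have hq : ¬ r ∣ q := fun h => hτ' (pow_succ r τ ▸ mul_dvd_mul_left _ h)
  have key := add_one_mul_moser_pow_mul hr τ hq
  have hdvd : (r + 1) ∣ r ^ (2 * τ + 1) + 1 :=
    (Nat.dvd_add_right (dvd_mul_right _ _)).mp (key ▸ dvd_mul_right _ _)
  refine ⟨hdvd, Nat.eq_of_mul_eq_mul_left (Nat.succ_pos r) ?_⟩
  rw [key, Nat.mul_add, Nat.mul_div_cancel' hdvd]

/-- Recursion for the Moser numbers: for `n ≥ 1`,
`m_r(n) = m_r(n−1) + (r^(2τ+1) + 1)/(r + 1)` where `τ` is the largest integer with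
`r^τ ∣ n`; moreover `r + 1` divides `r^(2τ+1) + 1`. -/
theorem moser_recursion (r : ℕ) (hr : 2 ≤ r) (n : ℕ) (hn : 1 ≤ n)
    (τ : ℕ) (hτ : r ^ τ ∣ n) (hτ' : ¬ r ^ (τ + 1) ∣ n) :
    (r + 1) ∣ r ^ (2 * τ + 1) + 1 ∧
      moser r n = moser r (n - 1) + (r ^ (2 * τ + 1) + 1) / (r + 1) :=
  moser_recursion_general r hr n τ hτ hτ'
end

section
/- For every n ≥ 2, W((s^{(2)}_n − 1)/2) = (4^{t+1} + 2)/6, where t ≥ 0 is the largest integer such that 2^t divides n − 1; note that 6 divides 4^{t+1} + 2, so the quotient is an integer. -/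
/-! `m₂` moves the binary digit of `m` at position `i` to position `2i`, so `m₂(m)` has no
binary digits at odd positions, and for every `N` one has `W(N) = 1 + oddBits (N - 1)`, where
`oddBits x` keeps the odd-position binary digits of `x`. Writing `n - 1 = 2^t q` with `q` odd,
`N = m₂(n - 1) = 4^t m₂(q)` with `m₂(q)` odd, so `N - 1 = 4^t (m₂(q) - 1) + (4^t - 1)`: the first
summand has only even-position digits and the second is `2t` ones, whence
`oddBits (N - 1) = 2 + 8 + ⋯ + 2^(2t-1) = 2(4^t - 1)/3`. -/

def oddDigitSum : List ℕ → ℕ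
  | [] => 0
  | [_] => 0
  | _ :: b :: l => 2 * b + 4 * oddDigitSum l

theorem sum_filter_odd_zipIdx (L : List ℕ) (i : ℕ) :
    ((((L.zipIdx (2 * i)).map Prod.swap).filter (fun p => p.1 % 2 = 1)).map
      (fun p => p.2 * 2 ^ p.1)).sum = 4 ^ i * oddDigitSum L := by
  induction L using oddDigitSum.induct generalizing i with
  | case1 => simp [oddDigitSum]
  | case2 a => simp [oddDigitSum]
  | case3 a b l ih =>
    have h := ih (i + 1)
    simp only [List.zipIdx_cons, List.map_cons, Prod.swap, List.filter_cons,
      show 2 * i + 1 + 1 = 2 * (i + 1) by ring] at h ⊢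
    simp [h, oddDigitSum, pow_succ, pow_mul]
    ring

def oddBits (x : ℕ) : ℕ := oddDigitSum (Nat.digits 2 x)

theorem oddBits_eq (x : ℕ) : oddBits x = 4 * oddBits (x / 4) + 2 * (x / 2 % 2) := by
  rcases lt_or_ge x 4 with hx | hx
  · interval_cases x <;> simp [oddBits, oddDigitSum]
  · rw [oddBits, Nat.digits_def' one_lt_two (by omega), Nat.digits_def' one_lt_two (by omega),
      Nat.div_div_eq_div_mul, oddDigitSum, oddBits, add_comm]
    rfl

theorem oddBits_sub_one_of_odd {x : ℕ} (hx : x % 2 = 1) : oddBits (x - 1) = oddBits x := by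
  rw [oddBits_eq x, oddBits_eq (x - 1), show (x - 1) / 4 = x / 4 by omega,
    show (x - 1) / 2 = x / 2 by omega]

theorem W_eq_one_add_oddBits (N : ℕ) : W N = 1 + oddBits (N - 1) := by
  have h := sum_filter_odd_zipIdx (Nat.digits 2 (if N % 2 = 1 then N else N - 1)) 0
  rw [mul_zero, pow_zero, one_mul] at h
  simp only [W, h]
  split_ifs with hN
  · rw [← oddBits, oddBits_sub_one_of_odd hN]
  · rfl

theorem moser_two_eq (m : ℕ) : moser 2 m = 4 * moser 2 (m / 2) + m % 2 := by
  rcases Nat.eq_zero_or_pos m with rfl | hm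
  · rfl
  · rw [moser, Nat.digits_def' one_lt_two hm, Nat.ofDigits_cons, moser]
    ring

theorem moser_two_pos {m : ℕ} (hm : 0 < m) : 0 < moser 2 m := by
  induction m using Nat.strong_induction_on with
  | _ m ih =>
    rw [moser_two_eq]
    rcases Nat.mod_two_eq_zero_or_one m with h | h
    · have := ih (m / 2) (by omega) (by omega)
      omega
    · omega

theorem oddBits_moser_two (m : ℕ) : oddBits (moser 2 m) = 0 := by
  induction m using Nat.strong_induction_on with
  | _ m ih =>
    rcases Nat.eq_zero_or_pos m with rfl | hm
    · rfl
    · rw [oddBits_eq, moser_two_eq,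
        show (4 * moser 2 (m / 2) + m % 2) / 4 = moser 2 (m / 2) by omega, ih (m / 2) (by omega)]
      omega

theorem three_mul_oddBits_moser_two_sub_one (t : ℕ) {q : ℕ} (hq : q % 2 = 1) :
    3 * oddBits (moser 2 (2 ^ t * q) - 1) + 2 = 2 * 4 ^ t := by
  induction t with
  | zero =>
    rw [pow_zero, one_mul, oddBits_sub_one_of_odd (by rw [moser_two_eq]; omega), oddBits_moser_two]
    rfl
  | succ t ih =>
    have hpos : 0 < moser 2 (2 ^ t * q) := moser_two_pos (Nat.mul_pos (by positivity) (by omega))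
    have hsplit : moser 2 (2 ^ (t + 1) * q) - 1 = 4 * (moser 2 (2 ^ t * q) - 1) + 3 := by
      rw [moser_two_eq, pow_succ, mul_right_comm, Nat.mul_div_cancel _ two_pos, Nat.mul_mod_left]
      omega
    rw [hsplit, oddBits_eq,
      show (4 * (moser 2 (2 ^ t * q) - 1) + 3) / 4 = moser 2 (2 ^ t * q) - 1 by omega, pow_succ]
    omega

theorem W_moserS_formula_general (n : ℕ)
    (t : ℕ) (ht : 2 ^ t ∣ n - 1) (ht' : ¬ 2 ^ (t + 1) ∣ n - 1) :
    6 ∣ 4 ^ (t + 1) + 2 ∧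
      W ((moserS 2 n - 1) / 2) = (4 ^ (t + 1) + 2) / 6 := by
  obtain ⟨q, hq⟩ := ht
  have hq_odd : q % 2 = 1 := by
    by_contra h
    exact ht' (hq ▸ pow_succ 2 t ▸ mul_dvd_mul_left _ (Nat.dvd_of_mod_eq_zero (by omega)))
  have hW : W ((moserS 2 n - 1) / 2) = 1 + oddBits (moser 2 (2 ^ t * q) - 1) := by
    rw [moserS, Nat.add_sub_cancel, Nat.mul_div_cancel_left _ two_pos, hq, W_eq_one_add_oddBits]
  have h6 : 4 ^ (t + 1) + 2 = 6 * W ((moserS 2 n - 1) / 2) := by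
    have := three_mul_oddBits_moser_two_sub_one t hq_odd
    rw [hW, pow_succ]
    omega
  rw [h6, Nat.mul_div_cancel_left _ (by norm_num)]
  exact ⟨dvd_mul_right _ _, rfl⟩

/-- For every `n ≥ 2`, `W((s^(2)_n − 1)/2) = (4^(t+1) + 2)/6`, where `t` is the largest
integer with `2^t ∣ n − 1`; moreover `6` divides `4^(t+1) + 2`. -/
theorem W_moserS_formula (n : ℕ) (hn : 2 ≤ n)
    (t : ℕ) (ht : 2 ^ t ∣ n - 1) (ht' : ¬ 2 ^ (t + 1) ∣ n - 1) :
    6 ∣ 4 ^ (t + 1) + 2 ∧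
      W ((moserS 2 n - 1) / 2) = (4 ^ (t + 1) + 2) / 6 :=
  W_moserS_formula_general n t ht ht'
end
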